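/- Let $k,N\in\mathbb{N}$ and $t\geq 0$. Define $R(k,N,t)=\{c\in\{1,\dots,k\}^N : H(\mathrm{dist}(c))\leq t\}$, where $\mathrm{dist}(c)\in D_k$ is the empirical distribution of symbols of $c$ and $H(q)=-\sum_{i=1}^k q_i\log q_i$. Then, for fixed $k$ and $t$, $\limsup_{N\to\infty}\frac{1}{N}\log|R(k,N,t)|\leq t$. -/
import Mathlib

open Finset Real Filter

open scoped Classical in
/-- Grouping a product over positions by symbol. -/
private lemma bowen_prod_eq {N k : ℕ} (p : Fin k → ℝ) (c : Fin N → Fin k) :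
    ∏ m : Fin N, p (c m) =
      ∏ i : Fin k, p i ^ (Finset.univ.filter fun n : Fin N => c n = i).card := by
  rw [← Finset.prod_fiberwise_of_maps_to (g := c) (t := Finset.univ)
        (fun x _ => Finset.mem_univ _) (fun m => p (c m))]
  refine Finset.prod_congr rfl fun i _ => ?_
  rw [Finset.prod_congr rfl (fun x hx => ?_), Finset.prod_const]
  simp only [Finset.mem_filter] at hx
  rw [hx.2]

open scoped Classical in
/-- Each symbol count is the cardinality of a fiber, so the counts sum to `N`. -/
private lemma bowen_sum_cnt {N k : ℕ} (c : Fin N → Fin k) :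
    ∑ i : Fin k, (Finset.univ.filter fun n : Fin N => c n = i).card = N := by
  rw [← Finset.card_eq_sum_card_fiberwise (f := c) (t := Finset.univ)
        (fun x _ => Finset.mem_univ _)]
  simp

open scoped Classical in
private lemma bowen_card_le {k N : ℕ} (hN : 0 < N) (t : ℝ) (ht : 0 ≤ t) :
    (((Finset.univ.filter fun c : Fin N → Fin k =>
        (-∑ i : Fin k,
            (((Finset.univ.filter fun n : Fin N => c n = i).card : ℝ) / N) *
              Real.log (((Finset.univ.filter fun n : Fin N => c n = i).card : ℝ) / N)) ≤ t).card : ℝ))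
      ≤ (N + 1 : ℝ) ^ k * Real.exp (N * t) := by
  set S := Finset.univ.filter fun c : Fin N → Fin k =>
        (-∑ i : Fin k,
            (((Finset.univ.filter fun n : Fin N => c n = i).card : ℝ) / N) *
              Real.log (((Finset.univ.filter fun n : Fin N => c n = i).card : ℝ) / N)) ≤ t
    with hS
  set F : (Fin N → Fin k) → (Fin k → ℕ) :=
    fun c i => (Finset.univ.filter fun n : Fin N => c n = i).card with hF
  have hNpos : (0 : ℝ) < N := by exact_mod_cast hN
  -- fiberwise decomposition of the cardinality
  have hcard : S.card = ∑ n ∈ S.image F, (S.filter fun c => F c = n).card :=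
    Finset.card_eq_sum_card_fiberwise fun c hc => Finset.mem_image_of_mem F hc
  -- bound each fiber
  have hfiber : ∀ n ∈ S.image F,
      ((S.filter fun c => F c = n).card : ℝ) ≤ Real.exp (N * t) := by
    intro n hn
    obtain ⟨c₀, hc₀S, hc₀⟩ := Finset.mem_image.1 hn
    set p : Fin k → ℝ := fun i => (n i : ℝ) / N with hp
    have hpnn : ∀ i, 0 ≤ p i := fun i => by positivity
    -- the product of p over counts is at least exp (-(N*t))
    have hA : Real.exp (-(N * t)) ≤ ∏ i : Fin k, p i ^ n i := by
      have hexp : ∏ i : Fin k, p i ^ n i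
          = Real.exp (∑ i : Fin k, (n i : ℝ) * Real.log (p i)) := by
        rw [Real.exp_sum]
        refine Finset.prod_congr rfl fun i _ => ?_
        rcases Nat.eq_zero_or_pos (n i) with h0 | h0
        · simp [h0]
        · have hpi : 0 < p i := by
            rw [hp]
            positivity
          rw [Real.exp_nat_mul, Real.exp_log hpi]
      rw [hexp]
      apply Real.exp_le_exp.2
      have hsum : ∑ i : Fin k, (n i : ℝ) * Real.log (p i)
          = N * ∑ i : Fin k, p i * Real.log (p i) := by
        rw [Finset.mul_sum]
        refine Finset.sum_congr rfl fun i _ => ?_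
        rw [hp, ← mul_assoc]
        congr 1
        field_simp
      rw [hsum]
      have hH : -∑ i : Fin k, p i * Real.log (p i) ≤ t := by
        have := (Finset.mem_filter.1 hc₀S).2
        simpa [hp, ← hc₀, hF] using this
      nlinarith
    -- the fiber cardinality times the product is at most 1
    have hB : ((S.filter fun c => F c = n).card : ℝ) * ∏ i : Fin k, p i ^ n i ≤ 1 := by
      have hconst : ∀ c ∈ S.filter fun c => F c = n,
          (∏ m : Fin N, p (c m)) = ∏ i : Fin k, p i ^ n i := by
        intro c hc
        rw [bowen_prod_eq p c]
        have hcn : F c = n := (Finset.mem_filter.1 hc).2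
        exact Finset.prod_congr rfl fun i _ => by rw [← hcn]
      have h1 : ((S.filter fun c => F c = n).card : ℝ) * ∏ i : Fin k, p i ^ n i
          = ∑ c ∈ S.filter fun c => F c = n, ∏ m : Fin N, p (c m) := by
        rw [Finset.sum_congr rfl hconst, Finset.sum_const, nsmul_eq_mul]
      rw [h1]
      have h2 : ∑ c ∈ S.filter fun c => F c = n, ∏ m : Fin N, p (c m)
          ≤ ∑ c : Fin N → Fin k, ∏ m : Fin N, p (c m) := by
        apply Finset.sum_le_sum_of_subset_of_nonneg (Finset.subset_univ _)
        intro c _ _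
        exact Finset.prod_nonneg fun m _ => hpnn _
      refine h2.trans ?_
      have h3 : ∑ c : Fin N → Fin k, ∏ m : Fin N, p (c m)
          = ∏ m : Fin N, ∑ i : Fin k, p i := by
        rw [Finset.prod_univ_sum (fun _ => Finset.univ) (fun _ i => p i)]
        rw [← Fintype.piFinset_univ]
      rw [h3]
      have h4 : ∑ i : Fin k, p i = 1 := by
        rw [hp, ← Finset.sum_div]
        rw [show ∑ i : Fin k, (n i : ℝ) = (N : ℝ) by
          rw [← Nat.cast_sum]
          norm_cast
          rw [← hc₀, hF]
          exact bowen_sum_cnt c₀]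
        field_simp
      rw [h4]
      simp
    -- combine
    have hprodpos : 0 < ∏ i : Fin k, p i ^ n i :=
      lt_of_lt_of_le (Real.exp_pos _) hA
    have hle : ((S.filter fun c => F c = n).card : ℝ) ≤ 1 / ∏ i : Fin k, p i ^ n i :=
      (le_div_iff₀ hprodpos).2 (by linarith [hB])
    calc ((S.filter fun c => F c = n).card : ℝ)
        ≤ 1 / ∏ i : Fin k, p i ^ n i := hle
      _ ≤ 1 / Real.exp (-(N * t)) := by
          apply div_le_div_of_nonneg_left _ (Real.exp_pos _) hA
          norm_num
      _ = Real.exp (N * t) := by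
          rw [Real.exp_neg]
          simp
  -- bound the number of fibers
  have himg : ((S.image F).card : ℝ) ≤ (N + 1 : ℝ) ^ k := by
    have hsub : S.image F ⊆ Fintype.piFinset fun _ : Fin k => Finset.range (N + 1) := by
      intro n hn
      obtain ⟨c, _, hc⟩ := Finset.mem_image.1 hn
      rw [Fintype.mem_piFinset]
      intro i
      rw [Finset.mem_range, ← hc, hF]
      exact Nat.lt_succ_of_le ((Finset.card_filter_le _ _).trans_eq (by simp))
    calc ((S.image F).card : ℝ)
        ≤ ((Fintype.piFinset fun _ : Fin k => Finset.range (N + 1)).card : ℝ) := by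
          exact_mod_cast Finset.card_le_card hsub
      _ = (N + 1 : ℝ) ^ k := by
          rw [Fintype.card_piFinset]
          push_cast
          simp
  calc (S.card : ℝ) = ∑ n ∈ S.image F, ((S.filter fun c => F c = n).card : ℝ) := by
        rw [hcard]; push_cast; rfl
    _ ≤ ∑ _n ∈ S.image F, Real.exp (N * t) := Finset.sum_le_sum hfiber
    _ = ((S.image F).card : ℝ) * Real.exp (N * t) := by rw [Finset.sum_const, nsmul_eq_mul]
    _ ≤ (N + 1 : ℝ) ^ k * Real.exp (N * t) :=
        mul_le_mul_of_nonneg_right himg (Real.exp_pos _).le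

open scoped Classical in
/-- Bowen's counting lemma: the number of words `c ∈ {1,…,k}^N` whose empirical
distribution has entropy at most `t` grows at exponential rate at most `t`. -/
theorem stmt_5 (k : ℕ) (hk : 0 < k) (t : ℝ) (ht : 0 ≤ t) :
    Filter.limsup (fun N : ℕ =>
      Real.log (({c : Fin N → Fin k |
        (-∑ i : Fin k,
            (((Finset.univ.filter fun n : Fin N => c n = i).card : ℝ) / N) *
              Real.log (((Finset.univ.filter fun n : Fin N => c n = i).card : ℝ) / N)) ≤ t}.ncard : ℝ))
        / N) Filter.atTop ≤ t := by
  set f : ℕ → ℝ := fun N =>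
      Real.log (({c : Fin N → Fin k |
        (-∑ i : Fin k,
            (((Finset.univ.filter fun n : Fin N => c n = i).card : ℝ) / N) *
              Real.log (((Finset.univ.filter fun n : Fin N => c n = i).card : ℝ) / N)) ≤ t}.ncard : ℝ))
        / N with hf
  set g : ℕ → ℝ := fun N => (k : ℝ) * (Real.log (N + 1) / N) + t with hg
  -- ncard as Finset card
  have hncard : ∀ N : ℕ, ({c : Fin N → Fin k |
        (-∑ i : Fin k,
            (((Finset.univ.filter fun n : Fin N => c n = i).card : ℝ) / N) *
              Real.log (((Finset.univ.filter fun n : Fin N => c n = i).card : ℝ) / N)) ≤ t}.ncard)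
      = (Finset.univ.filter fun c : Fin N → Fin k =>
        (-∑ i : Fin k,
            (((Finset.univ.filter fun n : Fin N => c n = i).card : ℝ) / N) *
              Real.log (((Finset.univ.filter fun n : Fin N => c n = i).card : ℝ) / N)) ≤ t).card := by
    intro N
    rw [← Set.ncard_coe_finset]
    congr 1
    ext c
    simp
  -- f is eventually bounded by g
  have hfg : ∀ᶠ N in atTop, f N ≤ g N := by
    filter_upwards [eventually_ge_atTop 1] with N hN
    have hN0 : (0 : ℝ) < N := by exact_mod_cast hN
    have hlogbound : Real.log (({c : Fin N → Fin k |
        (-∑ i : Fin k,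
            (((Finset.univ.filter fun n : Fin N => c n = i).card : ℝ) / N) *
              Real.log (((Finset.univ.filter fun n : Fin N => c n = i).card : ℝ) / N)) ≤ t}.ncard : ℝ))
        ≤ (k : ℝ) * Real.log (N + 1) + N * t := by
      rw [hncard N]
      set m := (Finset.univ.filter fun c : Fin N → Fin k =>
        (-∑ i : Fin k,
            (((Finset.univ.filter fun n : Fin N => c n = i).card : ℝ) / N) *
              Real.log (((Finset.univ.filter fun n : Fin N => c n = i).card : ℝ) / N)) ≤ t).card
      have hub : (m : ℝ) ≤ (N + 1 : ℝ) ^ k * Real.exp (N * t) := bowen_card_le hN t ht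
      have hrhs : Real.log ((N + 1 : ℝ) ^ k * Real.exp (N * t))
          = (k : ℝ) * Real.log (N + 1) + N * t := by
        rw [Real.log_mul (by positivity) (Real.exp_ne_zero _), Real.log_pow, Real.log_exp]
      rcases Nat.eq_zero_or_pos m with h0 | h0
      · rw [h0]
        simp only [Nat.cast_zero, Real.log_zero]
        have : (0:ℝ) ≤ (k : ℝ) * Real.log (N + 1) := by
          apply mul_nonneg (by positivity)
          apply Real.log_nonneg
          linarith
        nlinarith
      · rw [← hrhs]
        apply Real.log_le_log (by exact_mod_cast h0) hub
    rw [hf, hg]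
    simp only
    rw [div_le_iff₀ hN0]
    calc Real.log _ ≤ (k : ℝ) * Real.log (N + 1) + N * t := hlogbound
      _ = ((k : ℝ) * (Real.log (N + 1) / N) + t) * N := by field_simp
  -- g tends to t
  have hT : Tendsto (fun N : ℕ => Real.log (N + 1) / N) atTop (nhds 0) := by
    have h1 : (fun x : ℝ => Real.log (x + 1)) =o[atTop] (fun x : ℝ => x + 1) :=
      Real.isLittleO_log_id_atTop.comp_tendsto (tendsto_atTop_add_const_right _ 1 tendsto_id)
    have h2 : (fun x : ℝ => x + 1) =O[atTop] (fun x : ℝ => x) := by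
      apply Asymptotics.IsBigO.of_bound 2
      filter_upwards [eventually_ge_atTop (1 : ℝ)] with x hx
      rw [Real.norm_of_nonneg (by linarith), Real.norm_of_nonneg (by linarith)]
      linarith
    have h3 : (fun x : ℝ => Real.log (x + 1)) =o[atTop] (fun x : ℝ => x) := h1.trans_isBigO h2
    have h4 : Tendsto (fun x : ℝ => Real.log (x + 1) / x) atTop (nhds 0) :=
      h3.tendsto_div_nhds_zero
    exact h4.comp tendsto_natCast_atTop_atTop
  have hgT : Tendsto g atTop (nhds t) := by
    have := (hT.const_mul (k : ℝ)).add_const t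
    simpa using this
  -- f is nonnegative (each value is log of a natural number, divided by N)
  have hfnn : ∀ N, 0 ≤ f N := by
    intro N
    rw [hf]
    apply div_nonneg _ (Nat.cast_nonneg N)
    rcases Nat.eq_zero_or_pos ({c : Fin N → Fin k |
        (-∑ i : Fin k,
            (((Finset.univ.filter fun n : Fin N => c n = i).card : ℝ) / N) *
              Real.log (((Finset.univ.filter fun n : Fin N => c n = i).card : ℝ) / N)) ≤ t}.ncard) with h0 | h0
    · rw [h0]; simp
    · apply Real.log_nonneg
      exact_mod_cast h0
  have hcob : IsCoboundedUnder (· ≤ ·) atTop f :=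
    isCoboundedUnder_le_of_le atTop (x := 0) hfnn
  have hbdd : IsBoundedUnder (· ≤ ·) atTop g := hgT.isBoundedUnder_le
  calc Filter.limsup f atTop ≤ Filter.limsup g atTop := limsup_le_limsup hfg hcob hbdd
    _ = t := hgT.limsup_eq
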